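/- arXiv:2408.12909 — 2 statements merged into one kernel-verified Lean document; each statement's English description precedes it below -/
import Mathlib

section
/- Let R ⊆ ℕ^n be invariant under every permutation of ℕ. If R is invariant under some injective binary operation f : ℕ² → ℕ, then R is invariant under every injective binary operation g : ℕ² → ℕ. -/
/-- A permutation-invariant relation over ℕ invariant under some
injective binary operation is invariant under every injective binary operation. -/
theorem stmt_7 (n : ℕ) (R : Set (Fin n → ℕ))
    (hinv : ∀ α : Equiv.Perm ℕ, ∀ t ∈ R, (fun i => α (t i)) ∈ R)
    (f : ℕ → ℕ → ℕ) (hf : Function.Injective (fun p : ℕ × ℕ => f p.1 p.2))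
    (hfR : ∀ s ∈ R, ∀ t ∈ R, (fun i => f (s i) (t i)) ∈ R) :
    ∀ g : ℕ → ℕ → ℕ, Function.Injective (fun p : ℕ × ℕ => g p.1 p.2) →
      ∀ s ∈ R, ∀ t ∈ R, (fun i => g (s i) (t i)) ∈ R := by
  intro g hg s hs t ht
  classical
  set F : ℕ × ℕ → ℕ := fun p => f p.1 p.2 with hF
  set G : ℕ × ℕ → ℕ := fun p => g p.1 p.2 with hG
  set S : Set (ℕ × ℕ) := Set.range (fun i => (s i, t i)) with hS
  have hSfin : S.Finite := Set.finite_range _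
  set A : Set ℕ := F '' S with hA
  set B : Set ℕ := G '' S with hB
  have hAfin : A.Finite := hSfin.image _
  have hBfin : B.Finite := hSfin.image _
  have hAc : (Aᶜ : Set ℕ).Infinite := hAfin.infinite_compl
  have hBc : (Bᶜ : Set ℕ).Infinite := hBfin.infinite_compl
  haveI := hAc.to_subtype
  haveI := hBc.to_subtype
  obtain ⟨eC⟩ : Nonempty ((Aᶜ : Set ℕ) ≃ (Bᶜ : Set ℕ)) := nonempty_equiv_of_countable
  let eAB : A ≃ B := (Equiv.Set.image F S hf).symm.trans (Equiv.Set.image G S hg)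
  let α : Equiv.Perm ℕ :=
    ((Equiv.Set.sumCompl A).symm.trans ((eAB.sumCongr eC).trans (Equiv.Set.sumCompl B)))
  have key : ∀ p ∈ S, α (F p) = G p := by
    intro p hp
    have hmem : F p ∈ A := ⟨p, hp, rfl⟩
    have h1 : (Equiv.Set.sumCompl A).symm (F p) = Sum.inl ⟨F p, hmem⟩ :=
      Equiv.Set.sumCompl_symm_apply_of_mem hmem
    have h2 : eAB ⟨F p, hmem⟩ = ⟨G p, ⟨p, hp, rfl⟩⟩ := by
      simp only [eAB, Equiv.trans_apply]
      have h3 : (Equiv.Set.image F S hf).symm ⟨F p, hmem⟩ = ⟨p, hp⟩ := by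
        rw [Equiv.symm_apply_eq]; rfl
      rw [h3]; rfl
    simp only [α, Equiv.trans_apply, h1, Equiv.sumCongr_apply, Sum.map_inl, h2,
      Equiv.Set.sumCompl_apply_inl]
  have hmemR := hfR s hs t ht
  have h := hinv α _ hmemR
  convert h using 1
  funext i
  exact (key (s i, t i) ⟨i, rfl⟩).symm
end

section
/- Let A ∪ B be a set of relations over ℕ, each invariant under all permutations of ℕ. Suppose φ(x_1,...,x_n) is a satisfiable conjunction of atomic constraints over A ∪ B, and let α be a satisfying assignment of minimum range, with range {1,...,c}. Then the formula φ(y_{α(x_1)},...,y_{α(x_n)}) in variables y_1,...,y_c is satisfied exactly by the injective assignments, i.e., it defines the relation NEQ_c. -/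
open Classical in
/-- Any function injective on a finite set of naturals agrees on that set with
some permutation of ℕ. -/
lemma exists_perm_extend (S : Set ℕ) (hS : S.Finite) (y : ℕ → ℕ)
    (hy : Set.InjOn y S) : ∃ π : Equiv.Perm ℕ, ∀ x ∈ S, π x = y x := by
  classical
  set T : Set ℕ := y '' S with hT
  have hTfin : T.Finite := hS.image y
  have h1 : (Sᶜ : Set ℕ).Infinite := hS.infinite_compl
  have h2 : (Tᶜ : Set ℕ).Infinite := hTfin.infinite_compl
  haveI : Infinite ↥(Sᶜ) := h1.to_subtype
  haveI : Infinite ↥(Tᶜ) := h2.to_subtype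
  obtain ⟨d1⟩ := nonempty_denumerable ↥(Sᶜ)
  obtain ⟨d2⟩ := nonempty_denumerable ↥(Tᶜ)
  let f : ↥(Sᶜ) ≃ ↥(Tᶜ) := (@Denumerable.eqv _ d1).trans (@Denumerable.eqv _ d2).symm
  let e : S ≃ T := Equiv.Set.imageOfInjOn y S hy
  refine ⟨(Equiv.Set.sumCompl S).symm.trans ((e.sumCongr f).trans (Equiv.Set.sumCompl T)),
    fun x hx => ?_⟩
  simp only [Equiv.trans_apply, Equiv.Set.sumCompl_symm_apply_of_mem hx,
    Equiv.sumCongr_apply, Sum.map_inl, Equiv.Set.sumCompl_apply_inl]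
  rfl

/-- Let φ be a satisfiable conjunction of atomic constraints over
permutation-invariant relations on ℕ, and let α be a satisfying assignment of
minimum range, with range {1,...,c}. Then the substituted formula
φ(y_{α(x₁)},...,y_{α(x_n)}) is satisfied exactly by the assignments injective on
{1,...,c}, i.e., it defines NEQ_c. -/
theorem stmt_19 (n c : ℕ)
    (C : Set (Σ m : ℕ, Set (Fin m → ℕ) × (Fin m → Fin n)))
    (hinv : ∀ cst ∈ C, ∀ π : Equiv.Perm ℕ, ∀ t ∈ cst.2.1,
      (fun i => π (t i)) ∈ cst.2.1)
    (α : Fin n → ℕ)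
    (hα : ∀ cst ∈ C, (fun i => α (cst.2.2 i)) ∈ cst.2.1)
    (hrange : Set.range α = Set.Icc 1 c)
    (hmin : ∀ β : Fin n → ℕ, (∀ cst ∈ C, (fun i => β (cst.2.2 i)) ∈ cst.2.1) →
      c ≤ (Finset.image β Finset.univ).card) :
    ∀ y : ℕ → ℕ,
      (∀ cst ∈ C, (fun i => y (α (cst.2.2 i))) ∈ cst.2.1) ↔
        Set.InjOn y (Set.Icc 1 c) := by
  classical
  have himg : Finset.image α Finset.univ = Finset.Icc 1 c := by
    apply Finset.coe_injective
    rw [Finset.coe_image, Finset.coe_univ, Set.image_univ, hrange, Finset.coe_Icc]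
  intro y
  constructor
  · intro hsat
    have hc := hmin (fun i => y (α i)) hsat
    have himg2 : Finset.image (fun i => y (α i)) Finset.univ
        = Finset.image y (Finset.Icc 1 c) := by
      rw [show (fun i => y (α i)) = y ∘ α from rfl, ← Finset.image_image, himg]
    rw [himg2] at hc
    have hle : (Finset.image y (Finset.Icc 1 c)).card ≤ (Finset.Icc 1 c).card :=
      Finset.card_image_le
    rw [Nat.card_Icc] at hle
    simp only [Nat.add_sub_cancel] at hle
    have heq : (Finset.image y (Finset.Icc 1 c)).card = (Finset.Icc 1 c).card := by
      rw [Nat.card_Icc]; omega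
    have := Finset.card_image_iff.mp heq
    rwa [Finset.coe_Icc] at this
  · intro hinj cst hcst
    obtain ⟨π, hπ⟩ := exists_perm_extend (Set.Icc 1 c) (Set.finite_Icc 1 c) y hinj
    have := hinv cst hcst π _ (hα cst hcst)
    have hagree : (fun i => π (α (cst.2.2 i))) = (fun i => y (α (cst.2.2 i))) := by
      funext i
      exact hπ _ (hrange ▸ Set.mem_range_self _)
    rwa [hagree] at this
end
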